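/- In the pumped sequence q of a path P between i < j (with v = pos(P_j) − pos(P_i)), every pair of consecutive elements interacts: for all k, the tiles q_k and q_{k+1} are adjacent with matching glues, given that consecutive tiles of P interact and that type(P_i)'s output glue toward P_{i+1} equals type(P_j)'s output glue toward P_{j+1} with pos(P_{i+1}) − pos(P_i) = pos(P_{j+1}) − pos(P_j). -/
import Mathlib


/-- A tile type: four sides, each carrying a glue type from `G`. -/
structure TileType (G : Type) where
  north : G
  south : G
  east : G
  west : G

/-- A tile: a position in ℤ² together with a tile type. -/
abbrev Tile (G : Type) := (ℤ × ℤ) × TileType G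

/-- Two tile types interact at relative displacement `d` (second minus first):
abutting glue types are equal with strength ≥ 1.  This depends only on the two
types and the displacement, hence is invariant under simultaneous translation. -/
def interacts {G : Type} (str : G → ℕ) (t t' : TileType G) (d : ℤ × ℤ) : Prop :=
  (d = (1, 0) ∧ t.east = t'.west ∧ 1 ≤ str t.east) ∨
  (d = (-1, 0) ∧ t.west = t'.east ∧ 1 ≤ str t.west) ∨
  (d = (0, 1) ∧ t.north = t'.south ∧ 1 ≤ str t.north) ∨
  (d = (0, -1) ∧ t.south = t'.north ∧ 1 ≤ str t.south)

/-- A path of length `n`: pairwise distinct positions, consecutive tiles interact. -/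
def IsPath {G : Type} (str : G → ℕ) (n : ℕ) (P : ℕ → Tile G) : Prop :=
  (∀ a < n, ∀ b < n, (P a).1 = (P b).1 → a = b) ∧
  (∀ k, k + 1 < n → interacts str (P k).2 (P (k + 1)).2 ((P (k + 1)).1 - (P k).1))

/-- Translation of a tile by a vector. -/
def Tile.translate {G : Type} (P : Tile G) (v : ℤ × ℤ) : Tile G := (P.1 + v, P.2)

/-- The pumping of `P` between `i` and `j`. -/
def pump {G : Type} (P : ℕ → Tile G) (i j : ℕ) (k : ℕ) : Tile G :=
  if k ≤ i then P k
  else Tile.translate (P (i + 1 + ((k - i - 1) % (j - i))))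
      (((k - i - 1) / (j - i) : ℕ) • ((P j).1 - (P i).1))


/-- The output glue of a tile type toward the neighbour at displacement `d`. -/
def glueOf {G : Type} (t : TileType G) (d : ℤ × ℤ) : Option G :=
  if d = (1, 0) then some t.east
  else if d = (-1, 0) then some t.west
  else if d = (0, 1) then some t.north
  else if d = (0, -1) then some t.south
  else none

theorem seam {G : Type} (str : G → ℕ) (P : ℕ → Tile G) (i j : ℕ) (hij : i < j)
    (hchain : ∀ k < j + 1, interacts str (P k).2 (P (k + 1)).2 ((P (k + 1)).1 - (P k).1))
    (hdir : (P (j + 1)).1 - (P j).1 = (P (i + 1)).1 - (P i).1)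
    (hglue : glueOf (P i).2 ((P (i + 1)).1 - (P i).1) =
      glueOf (P j).2 ((P (i + 1)).1 - (P i).1)) :
    interacts str (P j).2 (P (i + 1)).2 ((P (i + 1)).1 - (P i).1) := by
  have hi := hchain i (by omega)
  have hj := hchain j (by omega)
  rw [hdir] at hj
  rcases hj with ⟨h1, h2, h3⟩ | ⟨h1, h2, h3⟩ | ⟨h1, h2, h3⟩ | ⟨h1, h2, h3⟩ <;>
    rw [h1] at hi hglue ⊢ <;>
    simp only [interacts, glueOf, Prod.mk.injEq, if_pos, if_neg, reduceIte] at hi hglue ⊢ <;>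
    simp_all


/-- In the pumped sequence of a path `P` between `i < j`, every pair of consecutive
elements interacts, provided consecutive tiles of `P` interact (up to index `j+1`),
the step out of `P_j` has the same direction as the step out of `P_i`, and the output
glue of `P_i` toward `P_{i+1}` equals the output glue of `P_j` toward `P_{j+1}`. -/
theorem pump_consecutive_interact {G : Type} (str : G → ℕ) (P : ℕ → Tile G)
    (i j : ℕ) (hij : i < j)
    (hchain : ∀ k < j + 1, interacts str (P k).2 (P (k + 1)).2 ((P (k + 1)).1 - (P k).1))
    (hdir : (P (j + 1)).1 - (P j).1 = (P (i + 1)).1 - (P i).1)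
    (hglue : glueOf (P i).2 ((P (i + 1)).1 - (P i).1) =
      glueOf (P j).2 ((P (i + 1)).1 - (P i).1)) :
    ∀ k, interacts str (pump P i j k).2 (pump P i j (k + 1)).2
      ((pump P i j (k + 1)).1 - (pump P i j k).1) := by
  intro k
  rcases le_or_gt (k + 1) i with h1 | h1
  · -- both ≤ i
    rw [pump, pump, if_pos (by omega : k ≤ i), if_pos h1]
    exact hchain k (by omega)
  rcases le_or_gt k i with h2 | h2
  · -- k = i
    have hk : k = i := by omega
    subst hk
    rw [pump, pump, if_pos le_rfl, if_neg (by omega)]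
    have e1 : k + 1 - k - 1 = 0 := by omega
    rw [e1]
    simp only [Nat.zero_mod, Nat.zero_div, zero_smul, Tile.translate, add_zero, Nat.add_zero]
    exact hchain k (by omega)
  · -- k > i
    have hD : 0 < j - i := by omega
    set D := j - i with hDdef
    set m := k - i - 1 with hm
    have hm1 : k + 1 - i - 1 = m + 1 := by omega
    set r := m % D with hr
    set q := m / D with hq
    have hrD : r < D := Nat.mod_lt _ hD
    have hqr : q * D + r = m := by rw [hq, hr, Nat.mul_comm]; exact Nat.div_add_mod m D
    rw [pump, pump, if_neg (by omega), if_neg (by omega), hm1]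
    rcases lt_or_eq_of_le (Nat.succ_le_of_lt hrD) with hcase | hcase
    · -- within a period
      have e2 : (m + 1) % D = r + 1 := by
        have : m + 1 = (r + 1) + q * D := by omega
        rw [this, Nat.add_mul_mod_self_right, Nat.mod_eq_of_lt hcase]
      have e3 : (m + 1) / D = q := by
        have : m + 1 = (r + 1) + q * D := by omega
        rw [this, Nat.add_mul_div_right _ _ hD, Nat.div_eq_of_lt hcase, Nat.zero_add]
      rw [e2, e3]
      simp only [Tile.translate]
      have harith : ((P (i + 1 + (r + 1))).1 + q • ((P j).1 - (P i).1)) -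
          ((P (i + 1 + r)).1 + q • ((P j).1 - (P i).1)) =
          (P (i + 1 + r + 1)).1 - (P (i + 1 + r)).1 := by
        rw [show i + 1 + (r + 1) = i + 1 + r + 1 by omega]; abel
      rw [harith]
      exact hchain (i + 1 + r) (by omega)
    · -- seam
      have h4 : (q + 1) * D = q * D + D := by ring
      have e2 : (m + 1) % D = 0 := by
        have : m + 1 = 0 + (q + 1) * D := by omega
        rw [this, Nat.add_mul_mod_self_right, Nat.zero_mod]
      have e3 : (m + 1) / D = q + 1 := by
        have : m + 1 = 0 + (q + 1) * D := by omega
        rw [this, Nat.add_mul_div_right _ _ hD, Nat.zero_div, Nat.zero_add]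
      rw [e2, e3]
      have ej : i + 1 + r = j := by omega
      rw [ej]
      simp only [Tile.translate, Nat.add_zero]
      have harith : ((P (i + 1)).1 + (q + 1) • ((P j).1 - (P i).1)) -
          ((P j).1 + q • ((P j).1 - (P i).1)) = (P (i + 1)).1 - (P i).1 := by
        rw [succ_nsmul]; abel
      rw [harith]
      exact seam str P i j hij hchain hdir hglue
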